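/- arXiv:2312.11543 — 3 statements merged into one kernel-verified Lean document; each statement's English description precedes it below -/
import Mathlib

section
/- Dirac's theorem: let G be a finite simple undirected graph on n ≥ 3 vertices such that every vertex has degree at least n/2. Then G is Hamiltonian. -/
/-!
Arrange the vertices in a cyclic order and count its gaps, the cyclically consecutive pairs that
are not adjacent. Take an order with the fewest gaps and rotate it so that it reads
`a, v₁, …, v_{n-1}` with `(a, v₁)` a gap. Since `deg a + deg v₁ ≥ n` (Ore's condition, implied by
Dirac's), pigeonhole gives an `i` with `a ~ vᵢ` and `v₁ ~ v_{i+1}`. Reversing the segment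
`v₁ … vᵢ` replaces the pairs `(a, v₁)` and `(vᵢ, v_{i+1})` by the edges `(a, vᵢ)` and
`(v₁, v_{i+1})`, which removes the gap `(a, v₁)` and creates none. So the minimum is zero, and a
cyclic order without gaps is a Hamiltonian cycle.
-/

namespace List

variable {α : Type*} (R : α → α → Prop) [DecidableRel R]

def numGaps : List α → ℕ
  | a :: b :: l => (if R a b then 0 else 1) + numGaps (b :: l)
  | _ => 0

def numCyclicGaps : List α → ℕ
  | [] => 0
  | a :: l => numGaps R (a :: l ++ [a])

variable {R}

@[simp] lemma numGaps_nil : numGaps R [] = 0 := rfl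
@[simp] lemma numGaps_singleton (a : α) : numGaps R [a] = 0 := rfl
@[simp] lemma numGaps_cons_cons (a b : α) (l : List α) :
    numGaps R (a :: b :: l) = (if R a b then 0 else 1) + numGaps R (b :: l) := rfl

lemma numGaps_eq_zero_iff : ∀ {l : List α}, numGaps R l = 0 ↔ l.IsChain R
  | [] | [_] => by simp
  | a :: b :: l => by simp [numGaps_eq_zero_iff (l := b :: l)]

lemma numGaps_append_cons : ∀ (l₁ : List α) (b : α) (l₂ : List α),
    numGaps R (l₁ ++ b :: l₂) = numGaps R (l₁ ++ [b]) + numGaps R (b :: l₂)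
  | [], _, _ | [_], _, _ => by simp
  | a :: c :: l, b, l₂ => by
    have ih := numGaps_append_cons (c :: l) b l₂
    simp only [cons_append, numGaps_cons_cons] at ih ⊢
    omega

lemma numGaps_reverse [Std.Symm R] : ∀ l : List α, numGaps R l.reverse = numGaps R l
  | [] | [_] => rfl
  | a :: b :: l => by
    have : (a :: b :: l).reverse = l.reverse ++ b :: [a] := by simp
    rw [this, numGaps_append_cons, ← reverse_cons, numGaps_reverse (b :: l)]
    simp [Std.Symm.iff (r := R) b a, add_comm]

lemma exists_eq_append_cons_cons_not_rel {l : List α} (h : numGaps R l ≠ 0) :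
    ∃ s x y t, l = s ++ x :: y :: t ∧ ¬R x y := by
  contrapose! h
  exact numGaps_eq_zero_iff.2
    (isChain_iff_forall_rel_of_append_cons_cons.2 fun _ _ _ _ hl => h _ _ _ _ hl)

lemma numCyclicGaps_append_comm (l₁ l₂ : List α) :
    numCyclicGaps R (l₁ ++ l₂) = numCyclicGaps R (l₂ ++ l₁) := by
  rcases l₁ with _ | ⟨a, l₁⟩
  · simp
  rcases l₂ with _ | ⟨b, l₂⟩
  · simp
  have h₁ := numGaps_append_cons (R := R) (a :: l₁) b (l₂ ++ [a])
  have h₂ := numGaps_append_cons (R := R) (b :: l₂) a (l₁ ++ [b])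
  simp only [numCyclicGaps, cons_append, append_assoc] at h₁ h₂ ⊢
  omega

lemma IsRotated.numCyclicGaps_eq {l l' : List α} (h : l ~r l') :
    numCyclicGaps R l = numCyclicGaps R l' := by
  obtain ⟨n, rfl⟩ := h
  rw [rotate_eq_drop_append_take_mod, ← numCyclicGaps_append_comm, take_append_drop]

lemma exists_isRotated_cons_cons_not_rel {l : List α} (hl : 2 ≤ l.length)
    (h : numCyclicGaps R l ≠ 0) : ∃ a b r, (a :: b :: r) ~r l ∧ ¬R a b := by
  obtain _ | ⟨a, m⟩ := l
  · simp at hl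
  obtain ⟨s, x, y, t, hst, hxy⟩ := exists_eq_append_cons_cons_not_rel h
  obtain rfl | ⟨t, z, rfl⟩ := t.eq_nil_or_concat'
  · obtain ⟨hsx, rfl⟩ := append_singleton_inj.1 (hst.trans (by simp) : a :: m ++ [a] = s ++ [x] ++ [y])
    obtain _ | ⟨c, s⟩ := s
    · simp_all
    · obtain ⟨rfl, rfl⟩ := cons_eq_cons.1 hsx
      exact ⟨x, a, s, by simpa using (isRotated_append (l := a :: s) (l' := [x])).symm, hxy⟩
  · obtain ⟨hsx, -⟩ :=
      append_singleton_inj.1 (hst.trans (by simp) : a :: m ++ [a] = s ++ x :: y :: t ++ [z])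
    exact ⟨x, y, t ++ s, by simpa [hsx] using (isRotated_append (l := s) (l' := x :: y :: t)).symm,
      hxy⟩

lemma exists_eq_append_cons_cons_of_length_lt {P Q : α → Bool} :
    ∀ l : List α, l.length < l.countP P + l.tail.countP Q →
      ∃ s x y t, l = s ++ x :: y :: t ∧ P x ∧ Q y
  | [] => by simp
  | [a] => fun h => absurd h (not_lt.2 (by simpa using countP_le_length (p := P) (l := [a])))
  | a :: b :: l => by
    intro h
    by_cases hab : P a ∧ Q b
    · exact ⟨[], a, b, l, rfl, hab⟩
    obtain ⟨s, x, y, t, hl, hx, hy⟩ :=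
      exists_eq_append_cons_cons_of_length_lt (P := P) (Q := Q) (b :: l) (by
        simp only [length_cons, countP_cons, tail_cons] at h ⊢
        grind)
    exact ⟨a :: s, x, y, t, by simp [hl], hx, hy⟩

lemma Nodup.length_eq_card_of_forall_mem [Fintype α] {l : List α} (hl : l.Nodup)
    (hmem : ∀ a, a ∈ l) : l.length = Fintype.card α := by
  rw [← Finset.card_univ,
    ← Finset.eq_univ_of_forall (s := ⟨(l : Multiset _), Multiset.coe_nodup.2 hl⟩) hmem]
  rfl

end List

namespace SimpleGraph

open List

variable {V : Type*} {G : SimpleGraph V}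

lemma exists_walk_support_eq_of_isChain {u v : V} {l : List V} (hl : (u :: l).IsChain G.Adj)
    (hv : (u :: l).getLast (cons_ne_nil u l) = v) : ∃ p : G.Walk u v, p.support = u :: l := by
  subst hv
  exact ⟨Walk.ofSupport _ _ hl, Walk.support_ofSupport _ _⟩

variable [Fintype V] [DecidableRel G.Adj]

variable (G) in
lemma countP_adj_eq_degree {l : List V} (hl : l.Nodup) (hmem : ∀ v, v ∈ l) (v : V) :
    l.countP (G.Adj v ·) = G.degree v := by
  rw [← card_neighborFinset_eq_degree, neighborFinset_eq_filter,
    ← Finset.eq_univ_of_forall (s := ⟨(l : Multiset _), Multiset.coe_nodup.2 hl⟩) hmem,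
    countP_eq_length_filter]
  rfl

lemma exists_perm_numCyclicGaps_lt {a b : V} {r : List V} (hl : (a :: b :: r).Nodup)
    (hmem : ∀ v, v ∈ a :: b :: r) (hab : ¬G.Adj a b)
    (hdeg : Fintype.card V ≤ G.degree a + G.degree b) :
    ∃ l, l ~ a :: b :: r ∧ numCyclicGaps G.Adj l < numCyclicGaps G.Adj (a :: b :: r) := by
  have := G.symm
  have ha := G.countP_adj_eq_degree hl hmem a
  have hb := G.countP_adj_eq_degree hl hmem b
  rw [countP_cons_of_neg (by simp)] at ha
  rw [countP_cons_of_neg (by simp [G.adj_comm b a, hab]), countP_cons_of_neg (by simp)] at hb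
  have hlen := hl.length_eq_card_of_forall_mem hmem
  obtain ⟨s, x, y, t, hst, hx, hy⟩ := exists_eq_append_cons_cons_of_length_lt
    (P := fun v => G.Adj a v) (Q := fun v => G.Adj b v) (b :: r)
    (by simp only [length_cons, tail_cons] at hlen ⊢; omega)
  obtain ⟨q, hq⟩ : ∃ q, s ++ [x] = b :: q := by cases s <;> simp_all
  -- reverse the segment `s ++ [x]`, which runs from `b` to `x`
  refine ⟨a :: ((s ++ [x]).reverse ++ y :: t), ?_, ?_⟩
  · rw [hst]
    simpa using ((reverse_perm (s ++ [x])).append_right (y :: t)).cons a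
  · simp only [decide_eq_true_eq] at hx hy
    have e₁ := numGaps_append_cons (R := G.Adj) (a :: s) x (y :: t ++ [a])
    have e₂ := numGaps_append_cons (R := G.Adj) (a :: x :: s.reverse) y (t ++ [a])
    have e₃ : numGaps G.Adj (x :: (s.reverse ++ [y])) = numGaps G.Adj (y :: (s ++ [x])) := by
      simpa using numGaps_reverse (R := G.Adj) (y :: (s ++ [x]))
    have h₁ : numGaps G.Adj (a :: (s ++ [x])) = 1 + numGaps G.Adj (b :: q) := by
      simp [hq, hab]
    have h₂ : numGaps G.Adj (y :: (s ++ [x])) = numGaps G.Adj (b :: q) := by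
      simp [hq, G.adj_comm y b, hy]
    simp only [numCyclicGaps, hst, cons_append, append_assoc, reverse_append, reverse_cons,
      reverse_nil, nil_append, numGaps_cons_cons, hx, if_true] at e₁ e₂ ⊢
    omega

lemma exists_numCyclicGaps_eq_zero (h2 : 2 ≤ Fintype.card V)
    (hdeg : ∀ u v, u ≠ v → ¬G.Adj u v → Fintype.card V ≤ G.degree u + G.degree v) :
    ∃ l : List V, l.Nodup ∧ (∀ v, v ∈ l) ∧ numCyclicGaps G.Adj l = 0 := by
  obtain ⟨l, ⟨hl, hmem⟩, hmin⟩ := (InvImage.wf (numCyclicGaps G.Adj) wellFounded_lt).has_min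
    {l : List V | l.Nodup ∧ ∀ v, v ∈ l}
    ⟨Finset.univ.toList, Finset.nodup_toList _, fun v => Finset.mem_toList.2 (Finset.mem_univ v)⟩
  refine ⟨l, hl, hmem, by_contra fun h => ?_⟩
  obtain ⟨a, b, r, hrot, hab⟩ :=
    exists_isRotated_cons_cons_not_rel (hl.length_eq_card_of_forall_mem hmem ▸ h2) h
  have hl' := hrot.perm.nodup_iff.2 hl
  have hmem' v := hrot.perm.mem_iff.2 (hmem v)
  obtain ⟨l', hperm, hlt⟩ := exists_perm_numCyclicGaps_lt hl' hmem' hab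
    (hdeg a b (by rintro rfl; simp at hl') hab)
  exact hmin l' ⟨hperm.nodup_iff.2 hl', fun v => hperm.mem_iff.2 (hmem' v)⟩
    (hlt.trans_eq hrot.numCyclicGaps_eq)

lemma isHamiltonian_of_numCyclicGaps_eq_zero [DecidableEq V] (h3 : 3 ≤ Fintype.card V)
    {l : List V} (hl : l.Nodup) (hmem : ∀ v, v ∈ l) (h : numCyclicGaps G.Adj l = 0) :
    G.IsHamiltonian := by
  have hlen := hl.length_eq_card_of_forall_mem hmem
  obtain _ | ⟨a, m⟩ := l
  · simp at hlen; omega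
  have hchain : (a :: (m ++ [a])).IsChain G.Adj := numGaps_eq_zero_iff.1 h
  obtain ⟨p, hp⟩ := exists_walk_support_eq_of_isChain (v := a) hchain (by simp)
  have hplen : p.length = Fintype.card V := by
    have := p.length_support
    simp only [hp, length_cons, length_append, length_nil] at this hlen
    omega
  have hnil : ¬p.Nil := by rw [← Walk.length_eq_zero_iff, hplen]; omega
  refine fun _ => ⟨a, p, Walk.isHamiltonianCycle_iff_isCycle_and_length_eq.2 ⟨?_, hplen⟩⟩
  refine Walk.isCycle_iff_isPath_tail_and_le_length.2 ⟨Walk.IsPath.mk' ?_, hplen ▸ h3⟩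
  rw [p.support_tail_of_not_nil hnil, hp, tail_cons]
  exact (perm_append_singleton a m).nodup_iff.2 hl

theorem isHamiltonian_of_card_le_degree_add_degree [DecidableEq V] (h3 : 3 ≤ Fintype.card V)
    (hdeg : ∀ u v, u ≠ v → ¬G.Adj u v → Fintype.card V ≤ G.degree u + G.degree v) :
    G.IsHamiltonian :=
  have ⟨_, hl, hmem, h⟩ := exists_numCyclicGaps_eq_zero (by omega) hdeg
  isHamiltonian_of_numCyclicGaps_eq_zero h3 hl hmem h

end SimpleGraph

/-- Dirac's theorem: if `G` is a finite simple undirected graph on `n ≥ 3` vertices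
in which every vertex has degree at least `n / 2`, then `G` is Hamiltonian. -/
theorem dirac_theorem {V : Type*} [Fintype V] [DecidableEq V]
    (G : SimpleGraph V) [DecidableRel G.Adj] (n : ℕ)
    (hn : Fintype.card V = n) (h3 : 3 ≤ n)
    (h : ∀ v : V, (n : ℝ) / 2 ≤ (G.degree v : ℝ)) :
    G.IsHamiltonian := by
  subst hn
  refine G.isHamiltonian_of_card_le_degree_add_degree h3 fun u v _ _ => ?_
  have hu := h u
  have hv := h v
  exact_mod_cast (by linarith : (Fintype.card V : ℝ) ≤ G.degree u + G.degree v)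
end

section
/- Bondy–Chvátal (Chvátal degree-sequence) theorem: let G be a finite simple undirected graph on n ≥ 3 vertices, and let d₁ ≤ d₂ ≤ … ≤ dₙ be the ordered sequence of its vertex degrees. If for every integer k with 1 ≤ k < n/2 the implication (d_k ≤ k ⟹ d_{n−k} ≥ n − k) holds, then G is Hamiltonian. -/
/-!
Let `H ≥ G` be a maximal non-Hamiltonian graph on the same `n ≥ 3` vertices. Adding a missing
edge `ab` to `H` creates a Hamiltonian cycle, hence a Hamiltonian path from `a` to `b` in `H`, and
Ore's crossing argument turns that path into a Hamiltonian cycle of `H` unless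
`deg a + deg b < n`. Chvátal's condition passes from `G` to `H`, since degrees only grow, and it
rules this out unless `H` is complete: for a non-adjacent pair `a, b` of maximal degree sum with
`k = deg a ≤ deg b`, the `n - 1 - deg b ≥ k` non-neighbours of `b` have degree at most `k`, so
more than `k` vertices have degree at least `n - k`, and one of them is a non-neighbour of `a`.
But a complete graph on `n ≥ 3` vertices is Hamiltonian.
-/

open Finset SimpleGraph

namespace Fin

variable {n : ℕ} [NeZero n]

theorem lt_add_one_of_add_one_ne_zero {i : Fin n} (h : i + 1 ≠ 0) : i < i + 1 := by
  obtain ⟨m, rfl⟩ : ∃ m, n = m + 1 := Nat.exists_eq_succ_of_ne_zero (NeZero.ne n)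
  exact lt_add_one_iff.2 ((le_last i).lt_of_ne (by rintro rfl; simp at h))

theorem add_one_ne_zero_of_lt {i j : Fin n} (h : i < j) : i + 1 ≠ 0 := by
  obtain ⟨m, rfl⟩ : ∃ m, n = m + 1 := Nat.exists_eq_succ_of_ne_zero (NeZero.ne n)
  intro h0
  rw [← last_add_one m, add_left_inj] at h0
  exact (h0 ▸ h).not_ge (le_last j)

theorem add_one_le_of_lt' {i j : Fin n} (h : i < j) : i + 1 ≤ j := by
  obtain ⟨m, rfl⟩ : ∃ m, n = m + 1 := Nat.exists_eq_succ_of_ne_zero (NeZero.ne n)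
  exact add_one_le_of_lt h

theorem eq_of_sym2_add_one_eq {V : Type*} (hn : 3 ≤ n) {f : Fin n → V}
    (hf : Function.Injective f) {i k : Fin n} (h : s(f k, f (k + 1)) = s(f i, f (i + 1))) :
    k = i := by
  simp only [Sym2.eq_iff, hf.eq_iff] at h
  rcases h with ⟨h, -⟩ | ⟨rfl, h⟩
  · exact h
  · rw [add_assoc, add_eq_left, Fin.ext_iff, val_add, val_one', val_zero,
      Nat.one_mod_eq_one.2 (by omega), Nat.mod_eq_of_lt (by omega)] at h
    omega

/-- Fixes `0, …, i` and then runs backwards through `n - 1, …, i + 1`. -/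
def reverseAfter (i : Fin n) : Equiv.Perm (Fin n) :=
  Function.Involutive.toPerm (fun j ↦ if j ≤ i then j else i - j) fun j ↦ by
    by_cases hj : j ≤ i
    · simp [hj]
    · have : ¬ i - j ≤ i := by
        rw [le_def, coe_sub_iff_lt.2 (not_le.1 hj)]
        omega
      simp [hj, this]

theorem reverseAfter_of_le {i j : Fin n} (h : j ≤ i) : reverseAfter i j = j := if_pos h

theorem reverseAfter_of_lt {i j : Fin n} (h : i < j) : reverseAfter i j = i - j :=
  if_neg h.not_ge

end Fin

namespace Monotone

variable {n : ℕ} {α : Type*} [LinearOrder α] {d : Fin n → α}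

theorem le_of_lt_card_filter_le (hd : Monotone d) {i : Fin n} {c : α}
    (hi : (i : ℕ) < #{j | d j ≤ c}) : d i ≤ c := by
  by_contra! h
  have hsub : ({j | d j ≤ c} : Finset (Fin n)) ⊆ Iio i := fun j hj ↦ by
    simp only [mem_filter, mem_univ, true_and] at hj
    exact mem_Iio.2 (lt_of_not_ge fun hij ↦ (hj.trans_lt h).not_ge (hd hij))
  have := card_le_card hsub
  rw [Fin.card_Iio] at this
  omega

theorem card_sub_le_card_filter_le (hd : Monotone d) (i : Fin n) :
    n - i ≤ #{j | d i ≤ d j} :=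
  Fin.card_Ici i ▸ card_le_card fun j hj ↦ by simpa using hd (mem_Ici.1 hj)

end Monotone

namespace SimpleGraph

variable {V : Type*} [Fintype V] {G : SimpleGraph V}

section CyclicLabelling

variable {n : ℕ} [NeZero n]

theorem cycleGraph_adj_add_one (hn : 2 ≤ n) (i : Fin n) : (cycleGraph n).Adj i (i + 1) := by
  obtain ⟨m, rfl⟩ : ∃ m, n = m + 2 := ⟨n - 2, by omega⟩
  simp [cycleGraph_adj]

theorem isHamiltonian_iff_exists_equiv_adj_add_one [DecidableEq V] (hn : 3 ≤ n)
    (hcard : Fintype.card V = n) :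
    G.IsHamiltonian ↔ ∃ e : Fin n ≃ V, ∀ i, G.Adj (e i) (e (i + 1)) := by
  constructor
  · intro hG
    obtain ⟨a, p, hp⟩ := hG (by omega)
    obtain ⟨c⟩ := (cycleGraph_isContained_iff (G := G) (by omega : 2 < n)).2
      ⟨a, p, hp.isCycle, hp.length_eq.trans hcard⟩
    have hbij : Function.Bijective c.toHom :=
      (Fintype.bijective_iff_injective_and_card _).2 ⟨c.injective, by simp [hcard]⟩
    exact ⟨.ofBijective _ hbij, fun i ↦ c.toHom.map_adj (cycleGraph_adj_add_one (by omega) i)⟩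
  · rintro ⟨e, he⟩ -
    have hadj {i j : Fin n} (hij : (cycleGraph n).Adj i j) : G.Adj (e i) (e j) := by
      obtain ⟨m, rfl⟩ : ∃ m, n = m + 2 := ⟨n - 2, by omega⟩
      rcases cycleGraph_adj.1 hij with h | h <;> rw [sub_eq_iff_eq_add'] at h <;> subst h
      exacts [(he j).symm, he i]
    obtain ⟨a, p, hp, hlen⟩ := (cycleGraph_isContained_iff (G := G) (by omega : 2 < n)).1
      ⟨⟨⟨e, hadj⟩, e.injective⟩⟩
    exact ⟨a, p,
      Walk.isHamiltonianCycle_iff_isCycle_and_length_eq.2 ⟨hp, hlen.trans hcard.symm⟩⟩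

theorem isHamiltonian_top [DecidableEq V] (hn : 3 ≤ Fintype.card V) :
    (⊤ : SimpleGraph V).IsHamiltonian := by
  have : NeZero (Fintype.card V) := ⟨by omega⟩
  refine (isHamiltonian_iff_exists_equiv_adj_add_one hn rfl).2
    ⟨(Fintype.equivFin V).symm, fun i ↦ ?_⟩
  rw [top_adj, Ne, Equiv.apply_eq_iff_eq, left_eq_add, Fin.one_eq_zero_iff]
  omega

variable [DecidableRel G.Adj]

theorem exists_crossing_of_le_degree_add_degree (e : Fin n ≃ V)
    (hdeg : n ≤ G.degree (e 0) + G.degree (e (-1))) :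
    ∃ i, i + 1 ≠ 0 ∧ G.Adj (e 0) (e (i + 1)) ∧ G.Adj (e (-1)) (e i) := by
  set S : Finset (Fin n) := {i | G.Adj (e 0) (e (i + 1))}
  set T : Finset (Fin n) := {i | G.Adj (e (-1)) (e i)}
  have hS : #S = G.degree (e 0) := card_equiv ((Equiv.addRight 1).trans e) (by simp [S])
  have hT : #T = G.degree (e (-1)) := card_equiv e (by simp [T])
  have hSsub : S ⊆ univ.erase (-1) := fun i hi ↦
    mem_erase.2 ⟨by rintro rfl; simp [S] at hi, mem_univ i⟩
  have hTsub : T ⊆ univ.erase (-1) := fun i hi ↦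
    mem_erase.2 ⟨by rintro rfl; simp [T] at hi, mem_univ i⟩
  have hcard : #(univ.erase (-1 : Fin n)) = n - 1 := by simp
  obtain ⟨i, hi⟩ := inter_nonempty_of_card_lt_card_add_card hSsub hTsub
    (by have := NeZero.pos n; omega)
  simp only [S, T, mem_inter, mem_filter, mem_univ, true_and] at hi
  exact ⟨i, by rintro h; simp [h] at hi, hi⟩

theorem exists_equiv_adj_add_one_of_path (e : Fin n ≃ V)
    (hpath : ∀ j, j + 1 ≠ 0 → G.Adj (e j) (e (j + 1)))
    (hdeg : n ≤ G.degree (e 0) + G.degree (e (-1))) :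
    ∃ f : Fin n ≃ V, ∀ j, G.Adj (f j) (f (j + 1)) := by
  obtain ⟨i, hi, hS, hT⟩ := exists_crossing_of_le_degree_add_degree e hdeg
  refine ⟨(Fin.reverseAfter i).trans e, fun j ↦ ?_⟩
  simp only [Equiv.trans_apply]
  rcases lt_trichotomy j i with hji | rfl | hij
  · rw [Fin.reverseAfter_of_le hji.le, Fin.reverseAfter_of_le (Fin.add_one_le_of_lt' hji)]
    exact hpath j (Fin.add_one_ne_zero_of_lt hji)
  · rw [Fin.reverseAfter_of_le le_rfl,
      Fin.reverseAfter_of_lt (Fin.lt_add_one_of_add_one_ne_zero hi), show j - (j + 1) = -1 by abel]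
    exact hT.symm
  · by_cases hj : j + 1 = 0
    · rw [Fin.reverseAfter_of_lt hij, hj, Fin.reverseAfter_of_le (Fin.zero_le i),
        eq_neg_of_add_eq_zero_left hj, sub_neg_eq_add]
      exact hS.symm
    · rw [Fin.reverseAfter_of_lt hij,
        Fin.reverseAfter_of_lt (hij.trans (Fin.lt_add_one_of_add_one_ne_zero hj))]
      have hsucc : i - (j + 1) + 1 = i - j := by abel
      have hne : i - (j + 1) + 1 ≠ 0 := by
        rw [hsucc, sub_ne_zero]
        exact hij.ne
      simpa [hsucc] using (hpath _ hne).symm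

theorem isHamiltonian_of_isHamiltonian_sup_edge [DecidableEq V] (hn : 3 ≤ Fintype.card V)
    {a b : V} (hdeg : Fintype.card V ≤ G.degree a + G.degree b)
    (hG : (G ⊔ edge a b).IsHamiltonian) : G.IsHamiltonian := by
  have : NeZero (Fintype.card V) := ⟨by omega⟩
  rw [isHamiltonian_iff_exists_equiv_adj_add_one hn rfl] at hG ⊢
  obtain ⟨f, hf⟩ := hG
  by_cases hall : ∀ i, G.Adj (f i) (f (i + 1))
  · exact ⟨f, hall⟩
  obtain ⟨i, hi⟩ := not_forall.1 hall
  have hedge (k) (hk : ¬ G.Adj (f k) (f (k + 1))) : s(f k, f (k + 1)) = s(a, b) := by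
    have := (sup_adj _ _ _ _).1 (hf k)
    simp only [hk, false_or, edge_adj] at this
    simpa [Sym2.eq_iff] using this.1
  -- rotate the cycle so that the edge `ab` joins its last vertex to its first
  refine exists_equiv_adj_add_one_of_path ((Equiv.addLeft (i + 1)).trans f) (fun j hj ↦ ?_) ?_
  · simp only [Equiv.trans_apply, Equiv.coe_addLeft]
    by_contra hnadj
    rw [← add_assoc] at hnadj
    have := Fin.eq_of_sym2_add_one_eq hn f.injective ((hedge _ hnadj).trans (hedge i hi).symm)
    rw [add_assoc, add_eq_left, add_comm] at this
    exact hj this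
  · rw [show (Equiv.addLeft (i + 1)).trans f 0 = f (i + 1) by simp,
      show (Equiv.addLeft (i + 1)).trans f (-1) = f i by simp]
    rcases Sym2.eq_iff.1 (hedge i hi) with ⟨ha, hb⟩ | ⟨hb, ha⟩ <;> rw [ha, hb] <;> omega

end CyclicLabelling

theorem exists_le_maximal_not_isHamiltonian [DecidableEq V] (hG : ¬ G.IsHamiltonian) :
    ∃ H, G ≤ H ∧ ¬ H.IsHamiltonian ∧
      ∀ a b, Hᶜ.Adj a b → (H ⊔ edge a b).IsHamiltonian := by
  obtain ⟨H, hGH, hmax⟩ :=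
    Finite.exists_le_maximal (p := fun H : SimpleGraph V ↦ ¬ H.IsHamiltonian) hG
  refine ⟨H, hGH, hmax.prop, fun a b hab ↦ ?_⟩
  by_contra hnot
  have := sup_le_iff.1 (hmax.le_of_ge hnot le_sup_left)
  rw [compl_adj] at hab
  exact hab.2 (((edge_le_iff H).1 this.2).resolve_left hab.1)

section Chvatal

variable [DecidableRel G.Adj]

/-- Chvátal's condition `d_k ≤ k → d_{n-k} ≥ n - k` for `1 ≤ k < n / 2`, stated by counting
vertices rather than through the sorted degree sequence `d`: `d_k ≤ k` says that at least `k`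
vertices have degree at most `k`, and `d_{n-k} ≥ n - k` that more than `k` vertices have degree at
least `n - k`. -/
def ChvatalCondition (G : SimpleGraph V) [DecidableRel G.Adj] : Prop :=
  ∀ k, 1 ≤ k → 2 * k < Fintype.card V → k ≤ #{v | G.degree v ≤ k} →
    k < #{v | Fintype.card V - k ≤ G.degree v}

theorem chvatalCondition_of_sorted_degrees {n : ℕ} (d : Fin n → ℕ) (hmono : Monotone d)
    (σ : V ≃ Fin n) (hd : ∀ v, d (σ v) = G.degree v)
    (h : ∀ k : ℕ, (hk1 : 1 ≤ k) → (hk2 : 2 * k < n) →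
      d ⟨k - 1, by omega⟩ ≤ k → n - k ≤ d ⟨n - k - 1, by omega⟩) :
    G.ChvatalCondition := by
  have hcard : Fintype.card V = n := by simp [Fintype.card_congr σ]
  have hcount (p : ℕ → Prop) [DecidablePred p] : #{v | p (G.degree v)} = #{i | p (d i)} :=
    card_equiv σ (by simp [hd])
  intro k hk1 hk2 hlow
  rw [hcard] at hk2 ⊢
  rw [hcount (· ≤ k)] at hlow
  rw [hcount (n - k ≤ ·)]
  have hhigh := h k hk1 hk2
    (hmono.le_of_lt_card_filter_le (i := ⟨k - 1, by omega⟩) (by rw [Fin.val_mk]; omega))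
  calc k < n - (n - k - 1) := by omega
    _ ≤ #{i | d ⟨n - k - 1, by omega⟩ ≤ d i} :=
          hmono.card_sub_le_card_filter_le ⟨n - k - 1, by omega⟩
    _ ≤ _ := card_le_card fun i hi ↦ by
          simp only [mem_filter, mem_univ, true_and] at hi ⊢
          omega

theorem ChvatalCondition.mono {H : SimpleGraph V} [DecidableRel H.Adj] (hGH : G ≤ H)
    (hG : G.ChvatalCondition) : H.ChvatalCondition := by
  intro k hk1 hk2 hlow
  have hdeg (v : V) : G.degree v ≤ H.degree v := degree_le_of_le hGH
  calc k < #{v | Fintype.card V - k ≤ G.degree v} :=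
        hG k hk1 hk2 <| hlow.trans <| card_le_card fun v hv ↦ by
          simp only [mem_filter, mem_univ, true_and] at hv ⊢
          exact (hdeg v).trans hv
    _ ≤ _ := card_le_card fun v hv ↦ by
          simp only [mem_filter, mem_univ, true_and] at hv ⊢
          exact hv.trans (hdeg v)

theorem ChvatalCondition.degree_pos (hn : 3 ≤ Fintype.card V) (hG : G.ChvatalCondition)
    (v : V) : 0 < G.degree v := by
  by_contra! h0
  have hlow : 1 ≤ #{w | G.degree w ≤ 1} := card_pos.2 ⟨v, by simp; omega⟩
  obtain ⟨w, hw, hwv⟩ := exists_mem_ne (hG 1 le_rfl (by omega) hlow) v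
  have hw : G.IsUniversal w := by
    by_contra hnu
    simp only [mem_filter, mem_univ, true_and] at hw
    exact ((G.degree_lt_card_sub_one w).2 hnu).not_ge hw
  exact h0.not_gt ((G.degree_pos_iff_exists_adj v).2 ⟨w, (hw hwv).symm⟩)

theorem ChvatalCondition.eq_top (hn : 3 ≤ Fintype.card V) (hG : G.ChvatalCondition)
    (hclosed : ∀ a b, Gᶜ.Adj a b → G.degree a + G.degree b < Fintype.card V) : G = ⊤ := by
  classical
  by_contra hne
  obtain ⟨a₀, b₀, hne₀, hadj₀⟩ := ne_top_iff_exists_not_adj.1 hne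
  obtain ⟨⟨a, b⟩, hab, hmax⟩ := exists_max_image ({p | Gᶜ.Adj p.1 p.2} : Finset (V × V))
    (fun p ↦ G.degree p.1 + G.degree p.2) ⟨(a₀, b₀), by simp [compl_adj, hne₀, hadj₀]⟩
  simp only [mem_filter, mem_univ, true_and, Prod.forall] at hab hmax
  wlog hle : G.degree a ≤ G.degree b generalizing a b
  · exact this b a hab.symm (fun x y hxy ↦ by have := hmax x y hxy; omega) (by omega)
  have hsum := hclosed a b hab
  set k := G.degree a
  have hlow : k ≤ #{v | G.degree v ≤ k} :=
    calc k ≤ Gᶜ.degree b := by rw [degree_compl]; omega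
      _ ≤ _ := card_le_card fun w hw ↦ by
        simp only [mem_neighborFinset, mem_filter, mem_univ, true_and] at hw ⊢
        have := hmax b w hw
        omega
  obtain ⟨w, hw, hwa⟩ := exists_mem_notMem_of_card_lt_card (s := G.neighborFinset a)
    (hG k (hG.degree_pos hn a) (by omega) hlow)
  simp only [mem_filter, mem_univ, true_and, mem_neighborFinset] at hw hwa
  have := hclosed a w ((compl_adj G a w).2 ⟨by rintro rfl; omega, hwa⟩)
  omega

end Chvatal

end SimpleGraph

/-- Bondy–Chvátal (Chvátal degree-sequence) theorem: let `G` be a finite simple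
undirected graph on `n ≥ 3` vertices with ordered degree sequence
`d₁ ≤ d₂ ≤ … ≤ dₙ`. If for every `k` with `1 ≤ k < n / 2` we have
`d_k ≤ k → d_{n-k} ≥ n - k`, then `G` is Hamiltonian. -/
theorem bondy_chvatal_theorem {V : Type*} [Fintype V] [DecidableEq V]
    (G : SimpleGraph V) [DecidableRel G.Adj] (n : ℕ)
    (hn : Fintype.card V = n) (h3 : 3 ≤ n)
    (d : Fin n → ℕ) (hmono : Monotone d)
    (σ : V ≃ Fin n) (hd : ∀ v : V, d (σ v) = G.degree v)
    (h : ∀ k : ℕ, (hk1 : 1 ≤ k) → (hk2 : 2 * k < n) →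
      d ⟨k - 1, by omega⟩ ≤ k → n - k ≤ d ⟨n - k - 1, by omega⟩) :
    G.IsHamiltonian := by
  subst hn
  by_contra hG
  obtain ⟨H, hGH, hH, hmax⟩ := exists_le_maximal_not_isHamiltonian hG
  classical
  have hchvatal : H.ChvatalCondition :=
    (chvatalCondition_of_sorted_degrees d hmono σ hd h).mono hGH
  have hclosed (a b : V) (hab : Hᶜ.Adj a b) : H.degree a + H.degree b < Fintype.card V :=
    lt_of_not_ge fun hdeg ↦ hH (isHamiltonian_of_isHamiltonian_sup_edge h3 hdeg (hmax a b hab))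
  rw [hchvatal.eq_top h3 hclosed] at hH
  exact hH (isHamiltonian_top h3)
end

section
/- Let p > 1 and let K_n be the complete graph on n ≥ 2 vertices. A nonzero real number λ is an eigenvalue of the graph p-Laplacian L_p of K_n if and only if there exist positive integers α and β with α + β ≤ n such that λ = n − α − β + (α^{1/(p−1)} + β^{1/(p−1)})^{p−1}. -/
/-!
Summing the eigenvalue equations over all vertices gives `λ ∑ φ_p(x k) = 0`, so for `λ ≠ 0` an
eigenvector has entries of both signs. Dividing the equation at a vertex of value `t > 0` by
`φ_p(t)` gives `∑ g(x k / t) = λ` with `g(u) = φ_p(u) - φ_p(u - 1)`. Now `g = 1` at `0` and `1`;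
for `p > 2` it grows as `u` moves away from `[0, 1]` and is `≤ 1` on `[0, 1]`, for `p < 2` the
reverse. If `a` is the smallest positive entry and `b > a` another one, no `x k / a` lies in
`(0, 1)`, so passing from `x k / a` to `x k / b` moves every term of the sum in the same direction,
strictly at a vertex of value `a`: a contradiction. Hence all positive entries equal some `a` and
all negative ones some `-b`, on `α` and `β` vertices. Then `∑ φ_p(x k) = 0` reads
`α a^(p-1) = β b^(p-1)` and the equation at a positive vertex yields the formula for `λ`;
conversely `a = β^(1/(p-1))`, `b = α^(1/(p-1))` gives an eigenvector. For `p = 2` the only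
nonzero eigenvalue is `n`, the case `α = β = 1`.
-/

open Finset

/-- `φ_p(t) = |t|^{p-2} t`. -/
noncomputable def phiP (p t : ℝ) : ℝ := |t| ^ (p - 2) * t

/-- `(λ, x)` is an eigenpair of the graph `p`-Laplacian `L_p`:
`x ≠ 0` and for every vertex `i`, `∑_{j ∼ i} φ_p(x i − x j) = λ φ_p(x i)`. -/
def IsPLapEigenpair {V : Type*} [Fintype V] [DecidableEq V]
    (G : SimpleGraph V) [DecidableRel G.Adj] (p : ℝ) (lam : ℝ) (x : V → ℝ) : Prop :=
  x ≠ 0 ∧ ∀ i : V, ∑ j ∈ G.neighborFinset i, phiP p (x i - x j) = lam * phiP p (x i)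

section Phi

variable {p : ℝ}

@[simp] lemma phiP_zero (p : ℝ) : phiP p 0 = 0 := by simp [phiP]

@[simp] lemma phiP_one (p : ℝ) : phiP p 1 = 1 := by simp [phiP]

lemma phiP_neg (p t : ℝ) : phiP p (-t) = -phiP p t := by
  simp [phiP]

lemma phiP_mul (p s t : ℝ) : phiP p (s * t) = phiP p s * phiP p t := by
  rw [phiP, phiP, phiP, abs_mul, Real.mul_rpow (abs_nonneg s) (abs_nonneg t)]; ring

lemma phiP_two (t : ℝ) : phiP 2 t = t := by simp [phiP]

lemma phiP_of_nonneg (hp : p ≠ 1) {t : ℝ} (ht : 0 ≤ t) : phiP p t = t ^ (p - 1) := by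
  rcases ht.eq_or_lt with rfl | ht
  · rw [phiP_zero, Real.zero_rpow (sub_ne_zero.2 hp)]
  · rw [phiP, abs_of_pos ht, ← Real.rpow_add_one ht.ne']; ring_nf

lemma phiP_of_nonpos (hp : p ≠ 1) {t : ℝ} (ht : t ≤ 0) : phiP p t = -(-t) ^ (p - 1) := by
  rw [← phiP_of_nonneg hp (neg_nonneg.2 ht), phiP_neg, neg_neg]

lemma phiP_nonpos {t : ℝ} (ht : t ≤ 0) : phiP p t ≤ 0 :=
  mul_nonpos_of_nonneg_of_nonpos (by positivity) ht

lemma phiP_eq_zero_iff {t : ℝ} : phiP p t = 0 ↔ t = 0 := by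
  refine ⟨fun h => ?_, fun h => h ▸ phiP_zero p⟩
  by_contra ht
  exact mul_ne_zero (Real.rpow_pos_of_pos (abs_pos.2 ht) _).ne' ht h

end Phi

lemma mul_rpow_sub_rpow_pos {x y z : ℝ} (hx : 0 < x) (hxy : x < y) (hz : z ≠ 0) :
    0 < z * (y ^ z - x ^ z) := by
  rcases hz.lt_or_gt with hz | hz
  · exact mul_pos_of_neg_of_neg hz (sub_neg.2 (Real.rpow_lt_rpow_of_neg hx hxy hz))
  · exact mul_pos hz (sub_pos.2 (Real.rpow_lt_rpow hx.le hxy hz))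

lemma mul_sub_rpow_pos {q u : ℝ} (hq : q ≠ 1) (hu0 : 0 < u) (hu1 : u < 1) :
    0 < (q - 1) * (u - u ^ q) := by
  have h := mul_rpow_sub_rpow_pos hu0 hu1 (sub_ne_zero.2 hq)
  have hu : u ^ q = u * u ^ (q - 1) := by
    conv_lhs => rw [show q = 1 + (q - 1) by ring, Real.rpow_add hu0, Real.rpow_one]
  rw [Real.one_rpow] at h
  rw [hu]
  nlinarith

lemma mul_one_sub_rpow_add_rpow_pos {q u : ℝ} (hq : q ≠ 1) (hu0 : 0 < u) (hu1 : u < 1) :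
    0 < (q - 1) * (1 - (u ^ q + (1 - u) ^ q)) := by
  have h₁ := mul_sub_rpow_pos hq hu0 hu1
  have h₂ := mul_sub_rpow_pos hq (sub_pos.2 hu1) (sub_lt_self 1 hu0)
  linarith

lemma strictMonoOn_mul_rpow_add_one_sub_rpow {q : ℝ} (hq0 : 0 < q) (hq : q ≠ 1) :
    StrictMonoOn (fun s : ℝ => (q - 1) * ((s + 1) ^ q - s ^ q)) (Set.Ici 0) := by
  have hcont := Real.continuous_rpow_const hq0.le
  refine strictMonoOn_of_hasDerivWithinAt_pos (convex_Ici 0) (by fun_prop)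
    (f' := fun s => q * ((q - 1) * ((s + 1) ^ (q - 1) - s ^ (q - 1)))) (fun s hs => ?_)
    (fun s hs => ?_)
  · rw [interior_Ici] at hs
    have h₁ := ((hasDerivAt_id' s).add_const 1).rpow_const (p := q)
      (Or.inl (by linarith [hs.out]))
    have h₂ := (hasDerivAt_id' s).rpow_const (p := q) (Or.inl (ne_of_gt hs.out))
    exact (((h₁.sub h₂).const_mul (q - 1)).congr_deriv (by ring)).hasDerivWithinAt
  · rw [interior_Ici] at hs
    exact mul_pos hq0 (mul_rpow_sub_rpow_pos hs.out (lt_add_one s) (sub_ne_zero.2 hq))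

noncomputable def phiStep (p u : ℝ) : ℝ := phiP p u - phiP p (u - 1)

section PhiStep

variable {p u : ℝ}

lemma phiStep_of_nonpos (hp : p ≠ 1) (hu : u ≤ 0) :
    phiStep p u = (-u + 1) ^ (p - 1) - (-u) ^ (p - 1) := by
  rw [phiStep, phiP_of_nonpos hp hu, phiP_of_nonpos hp (by linarith)]; ring_nf

lemma phiStep_of_one_le (hp : p ≠ 1) (hu : 1 ≤ u) :
    phiStep p u = (u - 1 + 1) ^ (p - 1) - (u - 1) ^ (p - 1) := by
  rw [phiStep, phiP_of_nonneg hp (by linarith), phiP_of_nonneg hp (by linarith), sub_add_cancel]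

lemma phiStep_of_mem_Icc (hp : p ≠ 1) (hu0 : 0 ≤ u) (hu1 : u ≤ 1) :
    phiStep p u = u ^ (p - 1) + (1 - u) ^ (p - 1) := by
  rw [phiStep, phiP_of_nonneg hp hu0, phiP_of_nonpos hp (by linarith)]; ring_nf

lemma mul_phiStep_sub_phiStep_mul_pos (hp : 1 < p) (hp2 : p ≠ 2) {s : ℝ} (hs0 : 0 < s)
    (hs1 : s < 1) (hu : u < 0 ∨ 1 ≤ u) : 0 < (p - 2) * (phiStep p u - phiStep p (s * u)) := by
  have hp1 : p ≠ 1 := hp.ne'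
  have hmono := strictMonoOn_mul_rpow_add_one_sub_rpow (q := p - 1) (by linarith)
    (fun h => hp2 (by linarith))
  rw [show p - 2 = p - 1 - 1 by ring, mul_sub, sub_pos]
  rcases hu with hu | hu
  · rw [phiStep_of_nonpos hp1 hu.le, phiStep_of_nonpos hp1 (by nlinarith)]
    exact hmono (Set.mem_Ici.2 (by nlinarith)) (Set.mem_Ici.2 (by linarith)) (by nlinarith)
  rcases le_or_gt 1 (s * u) with hsu | hsu
  · rw [phiStep_of_one_le hp1 hu, phiStep_of_one_le hp1 hsu]
    exact hmono (Set.mem_Ici.2 (by linarith)) (Set.mem_Ici.2 (by linarith)) (by nlinarith)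
  · have hlow := hmono.monotoneOn (a := 0) (b := u - 1) (Set.mem_Ici.2 le_rfl)
      (Set.mem_Ici.2 (by linarith)) (by linarith)
    rw [zero_add, Real.one_rpow, Real.zero_rpow (sub_ne_zero.2 hp1), sub_zero] at hlow
    have hmid := mul_one_sub_rpow_add_rpow_pos (q := p - 1) (fun h => hp2 (by linarith))
      (by positivity) hsu
    rw [phiStep_of_one_le hp1 hu, phiStep_of_mem_Icc hp1 (by positivity) hsu.le]
    linarith [mul_sub (p - 1 - 1) 1 ((s * u) ^ (p - 1) + (1 - s * u) ^ (p - 1))]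

end PhiStep

lemma mul_add_rpow_eq_of_mul_rpow_eq {q a b A B : ℝ} (hq : q ≠ 0) (ha : 0 ≤ a) (hb : 0 ≤ b)
    (hA : 0 ≤ A) (hB : 0 ≤ B) (h : A * a ^ q = B * b ^ q) :
    B * (a + b) ^ q = (A ^ (1 / q) + B ^ (1 / q)) ^ q * a ^ q := by
  have hroot : A ^ (1 / q) * a = B ^ (1 / q) * b := by
    have := congrArg (· ^ (1 / q)) h
    simp only [one_div] at this ⊢
    rwa [Real.mul_rpow hA (by positivity), Real.mul_rpow hB (by positivity),
      Real.rpow_rpow_inv ha hq, Real.rpow_rpow_inv hb hq] at this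
  calc B * (a + b) ^ q = (B ^ (1 / q) * (a + b)) ^ q := by
        rw [Real.mul_rpow (by positivity) (by positivity), one_div, Real.rpow_inv_rpow hB hq]
    _ = ((A ^ (1 / q) + B ^ (1 / q)) * a) ^ q := by congr 1; linear_combination -hroot
    _ = (A ^ (1 / q) + B ^ (1 / q)) ^ q * a ^ q := Real.mul_rpow (by positivity) ha

lemma exists_pos_of_sum_phiP_eq_zero {V : Type*} [Fintype V] {p : ℝ} {x : V → ℝ} (hx : x ≠ 0)
    (hsum : ∑ k, phiP p (x k) = 0) : ∃ i, 0 < x i := by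
  by_contra! h
  refine hx (funext fun i => (phiP_eq_zero_iff (p := p)).1 ?_)
  exact (sum_eq_zero_iff_of_nonpos fun k _ => phiP_nonpos (h k)).1 hsum i (mem_univ i)

section Eigenpair

variable {V : Type*} [Fintype V] [DecidableEq V] {p lam : ℝ} {x : V → ℝ}

lemma IsPLapEigenpair.neg {G : SimpleGraph V} [DecidableRel G.Adj]
    (hx : IsPLapEigenpair G p lam x) : IsPLapEigenpair G p lam (-x) := by
  refine ⟨neg_ne_zero.2 hx.1, fun i => ?_⟩
  simp only [Pi.neg_apply, neg_sub_neg, ← neg_sub (x i), phiP_neg, sum_neg_distrib, hx.2 i]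
  ring

lemma isPLapEigenpair_top_iff :
    IsPLapEigenpair (⊤ : SimpleGraph V) p lam x ↔
      x ≠ 0 ∧ ∀ i, ∑ j, phiP p (x i - x j) = lam * phiP p (x i) := by
  have hsum : ∀ i, ∑ j ∈ (⊤ : SimpleGraph V).neighborFinset i, phiP p (x i - x j) =
      ∑ j, phiP p (x i - x j) := fun i => by
    rw [SimpleGraph.neighborFinset_top, ← sum_compl_add_sum {i}, sum_singleton, sub_self,
      phiP_zero, add_zero]
  simp only [IsPLapEigenpair, hsum]

lemma IsPLapEigenpair.sum_phiP_eq_zero (hx : IsPLapEigenpair (⊤ : SimpleGraph V) p lam x)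
    (hlam : lam ≠ 0) : ∑ k, phiP p (x k) = 0 := by
  have hanti : ∑ i, ∑ j, phiP p (x i - x j) = -∑ i, ∑ j, phiP p (x i - x j) := by
    conv_lhs => rw [sum_comm]
    simp only [← sum_neg_distrib, ← phiP_neg, neg_sub]
  have h := sum_congr rfl fun i (_ : i ∈ univ) => (isPLapEigenpair_top_iff.1 hx).2 i
  rw [show ∑ i, ∑ j, phiP p (x i - x j) = 0 by linarith, ← mul_sum] at h
  exact (mul_eq_zero.1 h.symm).resolve_left hlam

/-- Divide the eigenvalue equation at `i` by `φ_p(x i)` and add `∑ φ_p(x k) = 0`. -/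
lemma IsPLapEigenpair.sum_phiStep_div_eq (hx : IsPLapEigenpair (⊤ : SimpleGraph V) p lam x)
    (hsum : ∑ k, phiP p (x k) = 0) {i : V} (hi : x i ≠ 0) :
    ∑ k, phiStep p (x k / x i) = lam := by
  have hdiv : ∀ k, phiP p (x k / x i) = phiP p (x k) * phiP p (x i)⁻¹ := fun k => by
    rw [div_eq_mul_inv, phiP_mul]
  have hshift : ∀ k, phiP p (x k / x i - 1) = -(phiP p (x i - x k) * phiP p (x i)⁻¹) :=
    fun k => by
      rw [← phiP_mul, ← phiP_neg]
      congr 1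
      field_simp
      ring
  have hinv : phiP p (x i) * phiP p (x i)⁻¹ = 1 := by
    rw [← phiP_mul, mul_inv_cancel₀ hi, phiP_one]
  simp only [phiStep, sum_sub_distrib, hdiv, hshift, ← sum_mul, sum_neg_distrib, hsum,
    (isPLapEigenpair_top_iff.1 hx).2 i]
  linear_combination lam * hinv

lemma IsPLapEigenpair.eq_of_pos (hp : 1 < p) (hp2 : p ≠ 2)
    (hx : IsPLapEigenpair (⊤ : SimpleGraph V) p lam x) (hsum : ∑ k, phiP p (x k) = 0)
    {i j : V} (hi : 0 < x i) (hj : 0 < x j) : x i = x j := by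
  obtain ⟨m, hm, hmin⟩ := exists_min_image (univ.filter (0 < x ·)) x ⟨i, by simpa using hi⟩
  simp only [mem_filter, mem_univ, true_and] at hm hmin
  suffices h : ∀ k, 0 < x k → x k = x m by rw [h i hi, h j hj]
  intro k hk
  by_contra hne
  have hlt : x m < x k := lt_of_le_of_ne (hmin k hk) (Ne.symm hne)
  have hterm : ∀ l, x l ≠ 0 →
      0 < (p - 2) * (phiStep p (x l / x m) - phiStep p (x l / x k)) := fun l hl => by
    rw [show x l / x k = x m / x k * (x l / x m) by field_simp]
    refine mul_phiStep_sub_phiStep_mul_pos hp hp2 (div_pos hm hk) ((div_lt_one hk).2 hlt) ?_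
    rcases hl.lt_or_gt with hl | hl
    · exact Or.inl (div_neg_of_neg_of_pos hl hm)
    · exact Or.inr ((one_le_div hm).2 (hmin l hl))
  have hpos : 0 < ∑ l, (p - 2) * (phiStep p (x l / x m) - phiStep p (x l / x k)) := by
    refine sum_pos' (fun l _ => ?_) ⟨m, mem_univ m, hterm m hm.ne'⟩
    rcases eq_or_ne (x l) 0 with hl | hl
    · simp [hl]
    · exact (hterm l hl).le
  rw [← mul_sum, sum_sub_distrib, hx.sum_phiStep_div_eq hsum hm.ne',
    hx.sum_phiStep_div_eq hsum hk.ne', sub_self, mul_zero] at hpos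
  exact hpos.false

lemma IsPLapEigenpair.eq_card_of_two (hx : IsPLapEigenpair (⊤ : SimpleGraph V) 2 lam x)
    (hlam : lam ≠ 0) : lam = Fintype.card V := by
  have hsum := hx.sum_phiP_eq_zero hlam
  simp only [phiP_two] at hsum
  obtain ⟨i, hi⟩ := Function.ne_iff.1 hx.1
  have h := (isPLapEigenpair_top_iff.1 hx).2 i
  simp only [phiP_two, sum_sub_distrib, sum_const, card_univ, hsum, nsmul_eq_mul,
    sub_zero] at h
  exact (mul_right_cancel₀ hi h).symm

end Eigenpair

section ThreeLevel

variable {V : Type*} [DecidableEq V] {P N : Finset V} {a b p lam : ℝ}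

def threeLevel (P N : Finset V) (a b : ℝ) (k : V) : ℝ :=
  if k ∈ P then a else if k ∈ N then -b else 0

lemma threeLevel_of_mem_left {k : V} (hk : k ∈ P) : threeLevel P N a b k = a := if_pos hk

lemma threeLevel_of_mem_right (hPN : Disjoint P N) {k : V} (hk : k ∈ N) :
    threeLevel P N a b k = -b := by
  rw [threeLevel, if_neg (disjoint_right.1 hPN hk), if_pos hk]

lemma threeLevel_of_notMem {k : V} (hP : k ∉ P) (hN : k ∉ N) : threeLevel P N a b k = 0 := by
  rw [threeLevel, if_neg hP, if_neg hN]

variable [Fintype V]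

lemma sum_threeLevel (hPN : Disjoint P N) (f : ℝ → ℝ) :
    ∑ k, f (threeLevel P N a b k) =
      #P * f a + #N * f (-b) + (Fintype.card V - #P - #N) * f 0 := by
  rw [← sum_add_sum_compl (P ∪ N), sum_union hPN,
    sum_congr rfl fun k hk => congrArg f (threeLevel_of_mem_left hk),
    sum_congr rfl fun k hk => congrArg f (threeLevel_of_mem_right hPN hk),
    sum_congr rfl fun k hk => congrArg f (threeLevel_of_notMem (by simp_all) (by simp_all))]
  simp only [sum_const, nsmul_eq_mul, card_compl, card_union_of_disjoint hPN]
  rw [Nat.cast_sub (card_union_of_disjoint hPN ▸ card_le_univ _)]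
  push_cast
  ring

lemma sum_phiP_sub_threeLevel (hPN : Disjoint P N) (t : ℝ) :
    ∑ k, phiP p (t - threeLevel P N a b k) =
      #P * phiP p (t - a) + #N * phiP p (t + b) + (Fintype.card V - #P - #N) * phiP p t := by
  simpa only [sub_neg_eq_add, sub_zero] using
    sum_threeLevel hPN (a := a) (b := b) (phiP p <| t - ·)

lemma IsPLapEigenpair.eq_of_threeLevel (hp : 1 < p) (hPN : Disjoint P N) (hP : P.Nonempty)
    (ha : 0 < a) (hb : 0 < b) (hlam : lam ≠ 0)
    (hx : IsPLapEigenpair (⊤ : SimpleGraph V) p lam (threeLevel P N a b)) :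
    lam = Fintype.card V - #P - #N +
      ((#P : ℝ) ^ (1 / (p - 1)) + (#N : ℝ) ^ (1 / (p - 1))) ^ (p - 1) := by
  have hp1 : p ≠ 1 := hp.ne'
  have hbalance : #P * a ^ (p - 1) = #N * b ^ (p - 1) := by
    have h := hx.sum_phiP_eq_zero hlam
    rw [sum_threeLevel hPN, phiP_zero, phiP_neg, phiP_of_nonneg hp1 ha.le,
      phiP_of_nonneg hp1 hb.le] at h
    linarith
  obtain ⟨i, hi⟩ := hP
  have heq := (isPLapEigenpair_top_iff.1 hx).2 i
  rw [sum_phiP_sub_threeLevel hPN, threeLevel_of_mem_left hi, sub_self, phiP_zero,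
    phiP_of_nonneg hp1 (by positivity), phiP_of_nonneg hp1 ha.le] at heq
  have hsum := mul_add_rpow_eq_of_mul_rpow_eq (by linarith) ha.le hb.le (by positivity)
    (by positivity) hbalance
  refine mul_right_cancel₀ (Real.rpow_pos_of_pos ha (p - 1)).ne' ?_
  linear_combination -heq + hsum

lemma isPLapEigenpair_threeLevel (hp : 1 < p) (hPN : Disjoint P N) (hP : P.Nonempty)
    (hN : N.Nonempty) :
    IsPLapEigenpair (⊤ : SimpleGraph V) p
      (Fintype.card V - #P - #N +
        ((#P : ℝ) ^ (1 / (p - 1)) + (#N : ℝ) ^ (1 / (p - 1))) ^ (p - 1))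
      (threeLevel P N ((#N : ℝ) ^ (1 / (p - 1))) ((#P : ℝ) ^ (1 / (p - 1)))) := by
  have hp1 : p ≠ 1 := hp.ne'
  have hroot : ∀ m : ℕ, phiP p ((m : ℝ) ^ (1 / (p - 1))) = m := fun m => by
    rw [phiP_of_nonneg hp1 (by positivity), one_div,
      Real.rpow_inv_rpow (by positivity) (sub_ne_zero.2 hp1)]
  have hφa := hroot #N
  have hφb := hroot #P
  set a := (#N : ℝ) ^ (1 / (p - 1))
  set b := (#P : ℝ) ^ (1 / (p - 1))
  have ha : 0 < a := Real.rpow_pos_of_pos (by simpa using hN.card_pos) _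
  have hb : 0 < b := Real.rpow_pos_of_pos (by simpa using hP.card_pos) _
  have hφab : phiP p (a + b) = (b + a) ^ (p - 1) := by
    rw [phiP_of_nonneg hp1 (by positivity), add_comm]
  rw [isPLapEigenpair_top_iff]
  refine ⟨fun h => ?_, fun i => ?_⟩
  · obtain ⟨i, hi⟩ := hP
    exact ha.ne' ((threeLevel_of_mem_left hi).symm.trans (congrFun h i))
  rw [sum_phiP_sub_threeLevel hPN]
  by_cases hiP : i ∈ P
  · rw [threeLevel_of_mem_left hiP, sub_self, phiP_zero, hφab, hφa]
    ring
  by_cases hiN : i ∈ N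
  · rw [threeLevel_of_mem_right hPN hiN, neg_add_cancel, phiP_zero, phiP_neg, hφb,
      show -b - a = -(a + b) by ring, phiP_neg, hφab]
    ring
  · rw [threeLevel_of_notMem hiP hiN, zero_sub, zero_add, phiP_neg, phiP_zero, hφa, hφb]
    ring

end ThreeLevel

lemma Finset.exists_disjoint_card_eq {V : Type*} [Fintype V] [DecidableEq V] {α β : ℕ}
    (h : α + β ≤ Fintype.card V) :
    ∃ P N : Finset V, Disjoint P N ∧ #P = α ∧ #N = β := by
  obtain ⟨Q, -, hQ⟩ := exists_subset_card_eq (s := (univ : Finset V)) (by simpa using h)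
  obtain ⟨P, hPQ, hP⟩ := exists_subset_card_eq (s := Q) (n := α) (by omega)
  exact ⟨P, Q \ P, disjoint_sdiff, hP, by rw [card_sdiff_of_subset hPQ]; omega⟩

section CompleteGraph

variable {V : Type*} [Fintype V] [DecidableEq V] {p lam : ℝ} {x : V → ℝ}

lemma IsPLapEigenpair.exists_eigenvalue_eq (hp : 1 < p) (hV : 2 ≤ Fintype.card V)
    (hlam : lam ≠ 0) (hx : IsPLapEigenpair (⊤ : SimpleGraph V) p lam x) :
    ∃ α β : ℕ, 0 < α ∧ 0 < β ∧ α + β ≤ Fintype.card V ∧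
      lam = Fintype.card V - α - β +
        ((α : ℝ) ^ (1 / (p - 1)) + (β : ℝ) ^ (1 / (p - 1))) ^ (p - 1) := by
  rcases eq_or_ne p 2 with rfl | hp2
  · refine ⟨1, 1, one_pos, one_pos, hV, ?_⟩
    rw [hx.eq_card_of_two hlam]
    norm_num
    ring
  have hsum := hx.sum_phiP_eq_zero hlam
  obtain ⟨i, hi⟩ := exists_pos_of_sum_phiP_eq_zero hx.1 hsum
  obtain ⟨j, hj⟩ := exists_pos_of_sum_phiP_eq_zero hx.neg.1 (hx.neg.sum_phiP_eq_zero hlam)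
  rw [Pi.neg_apply, neg_pos] at hj
  set P := univ.filter (0 < x ·)
  set N := univ.filter (x · < 0)
  have hPN : Disjoint P N := disjoint_filter.2 fun k _ h₁ h₂ => lt_asymm h₁ h₂
  have hxP : ∀ k, 0 < x k → x k = x i := fun k hk => hx.eq_of_pos hp hp2 hsum hk hi
  have hxN : ∀ k, x k < 0 → x k = x j := fun k hk => by
    simpa using hx.neg.eq_of_pos hp hp2 (hx.neg.sum_phiP_eq_zero hlam) (i := k) (j := j)
      (by simpa using hk) (by simpa using hj)
  have hx_eq : x = threeLevel P N (x i) (-x j) := by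
    funext k
    rcases lt_trichotomy (x k) 0 with hk | hk | hk
    · rw [threeLevel_of_mem_right hPN (by simpa [N] using hk), neg_neg, hxN k hk]
    · rw [threeLevel_of_notMem (by simp [P, hk]) (by simp [N, hk]), hk]
    · rw [threeLevel_of_mem_left (by simpa [P] using hk), hxP k hk]
  refine ⟨#P, #N, card_pos.2 ⟨i, by simpa [P] using hi⟩,
    card_pos.2 ⟨j, by simpa [N] using hj⟩, card_union_of_disjoint hPN ▸ card_le_univ _, ?_⟩
  rw [hx_eq] at hx
  exact hx.eq_of_threeLevel hp hPN ⟨i, by simpa [P] using hi⟩ hi (neg_pos.2 hj) hlam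

lemma exists_isPLapEigenpair_top (hp : 1 < p) {α β : ℕ} (hα : 0 < α) (hβ : 0 < β)
    (hαβ : α + β ≤ Fintype.card V) :
    ∃ x : V → ℝ, IsPLapEigenpair (⊤ : SimpleGraph V) p
      (Fintype.card V - α - β +
        ((α : ℝ) ^ (1 / (p - 1)) + (β : ℝ) ^ (1 / (p - 1))) ^ (p - 1)) x := by
  obtain ⟨P, N, hPN, rfl, rfl⟩ := exists_disjoint_card_eq (V := V) hαβ
  exact ⟨_, isPLapEigenpair_threeLevel hp hPN (card_pos.1 hα) (card_pos.1 hβ)⟩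

end CompleteGraph

/-- The nonzero eigenvalues of the graph `p`-Laplacian of the complete graph `K_n`
(`n ≥ 2`) are exactly the numbers
`n − α − β + (α^{1/(p−1)} + β^{1/(p−1)})^{p−1}` with `α, β` positive integers,
`α + β ≤ n`. -/
theorem pLap_eigenvalues_complete_graph (p : ℝ) (hp : 1 < p) (n : ℕ) (hn : 2 ≤ n)
    (lam : ℝ) (hlam : lam ≠ 0) :
    (∃ x : Fin n → ℝ, IsPLapEigenpair (⊤ : SimpleGraph (Fin n)) p lam x) ↔
      ∃ α β : ℕ, 0 < α ∧ 0 < β ∧ α + β ≤ n ∧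
        lam = (n : ℝ) - (α : ℝ) - (β : ℝ) +
          ((α : ℝ) ^ (1 / (p - 1)) + (β : ℝ) ^ (1 / (p - 1))) ^ (p - 1) := by
  constructor
  · rintro ⟨x, hx⟩
    simpa only [Fintype.card_fin] using
      hx.exists_eigenvalue_eq hp (by rwa [Fintype.card_fin]) hlam
  · rintro ⟨α, β, hα, hβ, hαβ, rfl⟩
    simpa only [Fintype.card_fin] using
      exists_isPLapEigenpair_top (V := Fin n) hp hα hβ (by rwa [Fintype.card_fin])
end
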